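/- Let n ≥ 1, d ≥ 1, and for each α ∈ {1,…,d} let (a^α, b^α) ∈ ℂⁿ × ℂⁿ with G_j^α := 1 + Σ_{k=j}^n a_k^α b_k^α, and choose nonzero s_j^α ∈ ℂ with (s_j^α)² = G_j^α and s_{n+1}^α = 1; define the invertible triangular matrices g₊,α and k_α as below. Define the column vectors Â^α := g₊,d⁻¹ ⋯ g₊,α⁻¹ a^α and the row vectors B̂^α := (b^α)ᵀ k_α⁻¹ k_{α+1}⁻¹ ⋯ k_d⁻¹. Then 1ₙ − Σ_{α=1}^d Â^α B̂^α = (g₊,1 ⋯ g₊,d)⁻¹ (k_1⁻¹ ⋯ k_d⁻¹), where Â^α B̂^α is the n×n product of the column Â^α with the row B̂^α. -/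

import Mathlib

open Matrix BigOperators

noncomputable section

attribute [local instance] Matrix.normedAddCommGroup Matrix.normedSpace

/-- complex-valued sign of an integer, with `csgn 0 = 0`. -/
def csgn (m : ℤ) : ℂ := (m.sign : ℂ)

/-- Kronecker delta with values in `ℂ`. -/
def cdelta {K : Type*} [DecidableEq K] (i j : K) : ℂ := if i = j then 1 else 0

/-!
Each pair of factors satisfies `g₊,α k_α = 1 + a^α (b^α)ᵀ`. Entrywise, the terms of the product
past the position `max j l` telescope in `1 / s_m²`, because `s_m² - s_{m+1}² = a_m b_m`.
With `U_α = g₊,d⁻¹ ⋯ g₊,α⁻¹` and `V_α = k_α⁻¹ ⋯ k_d⁻¹` this gives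
`Â^α B̂^α = U_α (g₊,α k_α - 1) V_α = U_{α+1} V_{α+1} - U_α V_α`,
so the sum telescopes to `1 - U_1 V_1`.
-/

theorem Fin.sum_Ici_sub {M : Type*} [AddCommGroup M] {n : ℕ} (a : Fin n) (f : Fin (n + 1) → M) :
    ∑ i ∈ Finset.Ici a, (f i.succ - f i.castSucc) = f (Fin.last n) - f a.castSucc := by
  obtain ⟨n, rfl⟩ : ∃ n', n = n' + 1 := Nat.exists_eq_add_one_of_ne_zero a.pos.ne'
  rw [← Finset.Icc_top, Fin.sum_Icc_sub le_top, Fin.top_eq_last, Fin.succ_last]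

namespace Matrix

variable {n R : Type*} [Fintype n] [DecidableEq n] [CommRing R]

theorem inv_list_prod (l : List (Matrix n n R)) : l.prod⁻¹ = (l.map (·⁻¹)).reverse.prod := by
  induction l with
  | nil => simp
  | cons M l ih => simp [mul_inv_rev, ih]

theorem one_sub_sum_vecMulVec_eq_inv_prod_mul_prod {d : ℕ} (g k : Fin d → Matrix n n R)
    (a b : Fin d → n → R) (hfac : ∀ α, g α * k α = 1 + vecMulVec (a α) (b α))
    (hg : ∀ α, IsUnit (g α).det) (hk : ∀ α, IsUnit (k α).det) :
    1 - ∑ α : Fin d, vecMulVec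
        ((((List.finRange d).drop α).map fun γ => (g γ)⁻¹).reverse.prod *ᵥ a α)
        (b α ᵥ* (((List.finRange d).drop α).map fun γ => (k γ)⁻¹).prod)
      = ((List.finRange d).map g).prod⁻¹ * ((List.finRange d).map fun γ => (k γ)⁻¹).prod := by
  set T : ℕ → Matrix n n R := fun i =>
    (((List.finRange d).drop i).map fun γ => (g γ)⁻¹).reverse.prod *
      (((List.finRange d).drop i).map fun γ => (k γ)⁻¹).prod with hT
  have hstep (α : Fin d) : vecMulVec
      ((((List.finRange d).drop α).map fun γ => (g γ)⁻¹).reverse.prod *ᵥ a α)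
      (b α ᵥ* (((List.finRange d).drop α).map fun γ => (k γ)⁻¹).prod) = T (α + 1) - T α := by
    have hcons : (List.finRange d).drop α = α :: (List.finRange d).drop (α + 1) := by
      rw [List.drop_eq_getElem_cons (by simp), List.getElem_finRange, Fin.cast_mk]
    have hvv : vecMulVec (a α) (b α) = g α * k α - 1 := by rw [hfac]; abel
    simp only [hT, hcons, List.map_cons, List.reverse_cons, List.prod_append, List.prod_cons,
      List.prod_nil, mul_one, ← mul_vecMulVec, ← vecMulVec_mul, hvv, mul_sub, sub_mul, mul_assoc,
      nonsing_inv_mul_cancel_left _ _ (hg α), mul_nonsing_inv_cancel_left _ _ (hk α)]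
  have hTd : T d = 1 := by simp [hT, List.drop_of_length_le]
  have hT0 : T 0 = ((List.finRange d).map g).prod⁻¹ *
      ((List.finRange d).map fun γ => (k γ)⁻¹).prod := by
    simp [hT, inv_list_prod, Function.comp_def]
  rw [Finset.sum_congr rfl fun α _ => hstep α,
    Fin.sum_univ_eq_sum_range (fun i => T (i + 1) - T i), Finset.sum_range_sub, hTd, hT0,
    sub_sub_cancel]

end Matrix

section TriangularFactors

variable {K : Type*} [Field K] {n : ℕ} (A B : Fin n → K) (S : Fin (n + 1) → K)

def upperFactor : Matrix (Fin n) (Fin n) K := of fun j k =>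
  if j = k then S j.castSucc / S j.succ
  else if j < k then A j * B k / (S k.castSucc * S k.succ) else 0

def lowerFactor : Matrix (Fin n) (Fin n) K := of fun j k =>
  if j = k then S j.castSucc / S j.succ
  else if k < j then A j * B k / (S j.castSucc * S j.succ) else 0

theorem lowerFactor_eq_transpose : lowerFactor A B S = (upperFactor B A S)ᵀ := by
  ext j k
  simp only [lowerFactor, upperFactor, transpose_apply, of_apply, eq_comm (a := k)]
  split_ifs with h <;> first | (subst h; rfl) | ring

theorem isUnit_det_upperFactor (hS : ∀ j, S j ≠ 0) : IsUnit (upperFactor A B S).det := by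
  have hupper : (upperFactor A B S).IsUpperTriangular := fun j k (hkj : k < j) => by
    simp [upperFactor, hkj.ne', hkj.not_gt]
  rw [det_of_isUpperTriangular hupper, isUnit_iff_ne_zero, Finset.prod_ne_zero_iff]
  intro j _
  simpa [upperFactor] using div_ne_zero (hS _) (hS _)

theorem isUnit_det_lowerFactor (hS : ∀ j, S j ≠ 0) : IsUnit (lowerFactor A B S).det := by
  rw [lowerFactor_eq_transpose, det_transpose]
  exact isUnit_det_upperFactor B A S hS

variable {A B S}

theorem sq_castSucc_eq_sq_succ_add
    (hsq : ∀ j : Fin (n + 1), S j ^ 2 = 1 + ∑ k : Fin n, if (j : ℕ) ≤ k then A k * B k else 0)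
    (j : Fin n) : S j.castSucc ^ 2 = S j.succ ^ 2 + A j * B j := by
  have hsplit (k : Fin n) : (if (j : ℕ) ≤ k then A k * B k else 0) =
      (if (j : ℕ) + 1 ≤ k then A k * B k else 0) + if k = j then A j * B j else 0 := by
    rcases lt_trichotomy k j with h | rfl | h
    · simp [h.ne, (Fin.lt_def.mp h).not_ge, show ¬ (j : ℕ) + 1 ≤ k by omega]
    · simp
    · simp [h.ne', (Fin.lt_def.mp h).le, Nat.succ_le_of_lt (Fin.lt_def.mp h)]
  rw [hsq, hsq, Fin.val_castSucc, Fin.val_succ, add_assoc,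
    Finset.sum_congr rfl fun k _ => hsplit k, Finset.sum_add_distrib, Finset.sum_ite_eq',
    if_pos (Finset.mem_univ j)]

theorem upperFactor_apply_mul_lowerFactor_apply (hS : ∀ j, S j ≠ 0)
    (hstep : ∀ j : Fin n, S j.castSucc ^ 2 = S j.succ ^ 2 + A j * B j) (j l m : Fin n) :
    upperFactor A B S j m * lowerFactor A B S m l =
      if max j l ≤ m then
        A j * B l * ((S m.succ ^ 2)⁻¹ - (S m.castSucc ^ 2)⁻¹) +
          if m = max j l then A j * B l * (S m.castSucc ^ 2)⁻¹ + (1 : Matrix (Fin n) (Fin n) K) j l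
          else 0
      else 0 := by
  have h1 := hS m.castSucc
  have h2 := hS m.succ
  rcases lt_or_ge m (max j l) with hlt | hge
  · rw [if_neg hlt.not_ge]
    rcases lt_max_iff.mp hlt with h | h
    · simp [upperFactor, h.ne', h.not_gt]
    · simp [lowerFactor, h.ne, h.not_gt]
  rw [if_pos hge]
  rcases hge.lt_or_eq with hgt | heq
  · obtain ⟨hjm, hlm⟩ := max_lt_iff.mp hgt
    simp only [upperFactor, lowerFactor, of_apply, if_neg hgt.ne', if_neg hjm.ne, if_pos hjm,
      if_neg hlm.ne', if_pos hlm, add_zero]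
    field_simp
    linear_combination -(A j * B l) * hstep m
  · rw [if_pos heq.symm]
    rcases lt_trichotomy j l with hjl | rfl | hjl
    · obtain rfl : m = l := by rw [← heq, max_eq_right hjl.le]
      simp [upperFactor, lowerFactor, one_apply, hjl, hjl.ne]
      field_simp
      ring
    · obtain rfl : m = j := by rw [← heq, max_self]
      simp [upperFactor, lowerFactor, one_apply]
      field_simp
      linear_combination S m.castSucc ^ 2 * hstep m
    · obtain rfl : m = j := by rw [← heq, max_eq_left hjl.le]
      simp [upperFactor, lowerFactor, one_apply, hjl, hjl.ne']
      field_simp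
      ring

theorem upperFactor_mul_lowerFactor (hS : ∀ j, S j ≠ 0)
    (hstep : ∀ j : Fin n, S j.castSucc ^ 2 = S j.succ ^ 2 + A j * B j)
    (hlast : S (Fin.last n) = 1) :
    upperFactor A B S * lowerFactor A B S = 1 + vecMulVec A B := by
  ext j l
  rw [mul_apply,
    Finset.sum_congr rfl fun m _ => upperFactor_apply_mul_lowerFactor_apply hS hstep j l m,
    ← Finset.sum_filter, Finset.filter_le_eq_Ici, Finset.sum_add_distrib, ← Finset.mul_sum,
    Finset.sum_ite_eq', if_pos (Finset.mem_Ici.mpr le_rfl),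
    Fin.sum_Ici_sub (max j l) fun i => (S i ^ 2)⁻¹, hlast, Matrix.add_apply, vecMulVec_apply]
  ring

end TriangularFactors

theorem statement14_general (n d : ℕ)
    (a b : Fin d → Fin n → ℂ) (s : Fin d → Fin (n + 1) → ℂ)
    (hs0 : ∀ α j, s α j ≠ 0)
    (hsq : ∀ α j, s α j ^ 2 = 1 + ∑ k : Fin n, (if (j : ℕ) ≤ (k : ℕ) then a α k * b α k else 0))
    (hlast : ∀ α, s α (Fin.last n) = 1)
    (gp km : Fin d → Matrix (Fin n) (Fin n) ℂ)
    (hgp : ∀ α j k, gp α j k =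
      if j = k then s α j.castSucc / s α j.succ
      else if j < k then a α j * b α k / (s α k.castSucc * s α k.succ) else 0)
    (hkm : ∀ α j k, km α j k =
      if j = k then s α j.castSucc / s α j.succ
      else if k < j then a α j * b α k / (s α j.castSucc * s α j.succ) else 0)
    (Ah Bh : Fin d → Fin n → ℂ)
    (hAh : ∀ α : Fin d, Ah α =
      ((((List.finRange d).drop (α : ℕ)).map (fun γ => (gp γ)⁻¹)).reverse).prod *ᵥ a α)
    (hBh : ∀ α : Fin d, Bh α =
      b α ᵥ* (((List.finRange d).drop (α : ℕ)).map (fun γ => (km γ)⁻¹)).prod) :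
    (1 : Matrix (Fin n) (Fin n) ℂ) - ∑ α : Fin d, Matrix.vecMulVec (Ah α) (Bh α)
      = (((List.finRange d).map gp).prod)⁻¹ *
          ((List.finRange d).map (fun γ => (km γ)⁻¹)).prod := by
  obtain rfl : gp = fun α => upperFactor (a α) (b α) (s α) := by
    funext α; ext j k; exact hgp α j k
  obtain rfl : km = fun α => lowerFactor (a α) (b α) (s α) := by
    funext α; ext j k; exact hkm α j k
  simp only [hAh, hBh]
  exact one_sub_sum_vecMulVec_eq_inv_prod_mul_prod _ _ a b
    (fun α => upperFactor_mul_lowerFactor (hs0 α) (sq_castSucc_eq_sq_succ_add (hsq α)) (hlast α))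
    (fun α => isUnit_det_upperFactor _ _ _ (hs0 α))
    (fun α => isUnit_det_lowerFactor _ _ _ (hs0 α))

/-- the identity `1ₙ − Σ_{α=1}^d Â^α B̂^α = (g₊,1⋯g₊,d)⁻¹ (k_1⁻¹⋯k_d⁻¹)`. -/
theorem statement14 (n d : ℕ) (hn : 1 ≤ n) (hd : 1 ≤ d)
    (a b : Fin d → Fin n → ℂ) (s : Fin d → Fin (n + 1) → ℂ)
    (hs0 : ∀ α j, s α j ≠ 0)
    (hsq : ∀ α j, s α j ^ 2 = 1 + ∑ k : Fin n, (if (j : ℕ) ≤ (k : ℕ) then a α k * b α k else 0))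
    (hlast : ∀ α, s α (Fin.last n) = 1)
    (gp km : Fin d → Matrix (Fin n) (Fin n) ℂ)
    (hgp : ∀ α j k, gp α j k =
      if j = k then s α j.castSucc / s α j.succ
      else if j < k then a α j * b α k / (s α k.castSucc * s α k.succ) else 0)
    (hkm : ∀ α j k, km α j k =
      if j = k then s α j.castSucc / s α j.succ
      else if k < j then a α j * b α k / (s α j.castSucc * s α j.succ) else 0)
    (Ah Bh : Fin d → Fin n → ℂ)
    (hAh : ∀ α : Fin d, Ah α =
      ((((List.finRange d).drop (α : ℕ)).map (fun γ => (gp γ)⁻¹)).reverse).prod *ᵥ a α)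
    (hBh : ∀ α : Fin d, Bh α =
      b α ᵥ* (((List.finRange d).drop (α : ℕ)).map (fun γ => (km γ)⁻¹)).prod) :
    (1 : Matrix (Fin n) (Fin n) ℂ) - ∑ α : Fin d, Matrix.vecMulVec (Ah α) (Bh α)
      = (((List.finRange d).map gp).prod)⁻¹ *
          ((List.finRange d).map (fun γ => (km γ)⁻¹)).prod :=
  statement14_general n d a b s hs0 hsq hlast gp km hgp hkm Ah Bh hAh hBh
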